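/- Let γ, δ be 0-1 vectors of length n, both with total sum n−K (0 ≤ K ≤ n). The (n+2)×(n+2) azure skew mirror instance ASM(γ,δ) of the 3-color consistency problem is consistent if and only if γ ⪰ δ^R. -/

import Mathlib

/-!
The last row and the last column of a realization are full, and comparing beige counts shows
that their beige cells off the corner sit exactly at the ones of `δ`, resp. `γ`. Hence the azure
cells of the upper-left `n × n` block form a `0`-`1` matrix with row sums `i - 1 + γ i` and
column sums `j - 1 + δ j`, and the Gale–Ryser inequality for its last `k` columns is precisely
`∑_{j > n - k} δ j ≤ ∑_{i ≤ k} γ i`.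

Conversely, start from the staircase `{(i, j) | i + j ≥ n + 1}`, with row sums `i` and column
sums `j`, and delete the cell `(i, j)` whenever `γ i = 0`, `δ j = 0` and `i`, `j` are the `m`-th
and `(K + 1 - m)`-th zeros of `γ` and `δ`. The majorization says exactly that all these cells lie
in the staircase; the last two rows and columns are then filled in by the forced pattern.
-/

open Finset

lemma card_filter_eq_one_eq_sum {α : Type*} {s : Finset α} {f : α → ℕ}
    (hf : ∀ x ∈ s, f x ≤ 1) : #{x ∈ s | f x = 1} = ∑ x ∈ s, f x := by
  rw [card_filter]
  refine sum_congr rfl fun x hx => ?_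
  have := hf x hx
  split_ifs <;> omega

lemma card_filter_eq_zero_add_sum {α : Type*} {s : Finset α} {f : α → ℕ}
    (hf : ∀ x ∈ s, f x ≤ 1) : #{x ∈ s | f x = 0} + ∑ x ∈ s, f x = #s := by
  rw [card_filter, ← sum_add_distrib, card_eq_sum_ones]
  refine sum_congr rfl fun x hx => ?_
  have := hf x hx
  split_ifs <;> omega

lemma card_filter_Icc_add_two (n : ℕ) (p : ℕ → Prop) [DecidablePred p] :
    #{j ∈ Icc 1 (n + 2) | p j} =
      #{j ∈ Icc 1 n | p j} + (if p (n + 1) then 1 else 0) + (if p (n + 2) then 1 else 0) := by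
  rw [card_filter, card_filter, sum_Icc_succ_top (by omega), sum_Icc_succ_top (by omega)]

lemma sum_Icc_one_add_sum_Icc_succ (f : ℕ → ℕ) {a b : ℕ} (h : a ≤ b) :
    ∑ i ∈ Icc 1 a, f i + ∑ i ∈ Icc (a + 1) b, f i = ∑ i ∈ Icc 1 b, f i := by
  rw [show Icc 1 a = Ioc 0 a from Icc_add_one_left_eq_Ioc 0 a,
    show Icc 1 b = Ioc 0 b from Icc_add_one_left_eq_Ioc 0 b, Icc_add_one_left_eq_Ioc]
  exact sum_Ioc_consecutive f (Nat.zero_le a) h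

lemma sum_Icc_reverse (f : ℕ → ℕ) {n k : ℕ} (hk : k ≤ n) :
    ∑ i ∈ Icc 1 k, f (n - i + 1) = ∑ j ∈ Icc (n - k + 1) n, f j := by
  refine sum_nbij' (fun i => n - i + 1) (fun j => n - j + 1) ?_ ?_ ?_ ?_ fun _ _ => rfl <;>
    intro a ha <;> simp only [mem_Icc] at ha ⊢ <;> omega

lemma sum_card_filter_le_sum_min {α β : Type*} (s : Finset α) {t u : Finset β} (htu : t ⊆ u)
    (r : α → β → Prop) [∀ a b, Decidable (r a b)] :
    ∑ b ∈ t, #{a ∈ s | r a b} ≤ ∑ a ∈ s, min #{b ∈ u | r a b} #t :=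
  calc ∑ b ∈ t, #{a ∈ s | r a b} = ∑ a ∈ s, #{b ∈ t | r a b} :=
        (sum_card_bipartiteAbove_eq_sum_card_bipartiteBelow r).symm
    _ ≤ _ := sum_le_sum fun _ _ =>
        le_min (card_le_card (filter_subset_filter _ htu)) (card_filter_le _ _)

lemma sum_Icc_sub_add_one_id {n k : ℕ} (hk : k ≤ n) :
    ∑ j ∈ Icc (n - k + 1) n, j = ∑ i ∈ Icc 1 k, i + (n - k) * k := by
  rw [show Icc (n - k + 1) n = (Icc 1 k).map (addLeftEmbedding (n - k)) by
      rw [map_add_left_Icc, Nat.sub_add_cancel hk],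
    sum_map]
  simp only [addLeftEmbedding_apply]
  rw [sum_add_distrib, sum_const, Nat.card_Icc, smul_eq_mul, Nat.add_sub_cancel, add_comm, mul_comm]

section ZeroCount

variable (f : ℕ → ℕ)

def zeroCount (i : ℕ) : ℕ := #{t ∈ Icc 1 i | f t = 0}

lemma zeroCount_zero : zeroCount f 0 = 0 := rfl

lemma zeroCount_succ (j : ℕ) :
    zeroCount f (j + 1) = zeroCount f j + if f (j + 1) = 0 then 1 else 0 := by
  simp only [zeroCount, card_filter]
  exact sum_Icc_succ_top (by omega) _

lemma zeroCount_mono : Monotone (zeroCount f) := fun _ _ h =>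
  card_le_card (filter_subset_filter _ (Icc_subset_Icc le_rfl h))

lemma zeroCount_lt_zeroCount {a b : ℕ} (hab : a < b) (hb : f b = 0) :
    zeroCount f a < zeroCount f b := by
  obtain ⟨c, rfl⟩ : ∃ c, b = c + 1 := ⟨b - 1, by omega⟩
  have := zeroCount_mono f (Nat.le_of_lt_succ hab)
  rw [zeroCount_succ, if_pos hb]
  omega

lemma eq_of_zeroCount_eq {a b : ℕ} (ha : f a = 0) (hb : f b = 0)
    (hab : zeroCount f a = zeroCount f b) : a = b := by
  rcases lt_trichotomy a b with h | h | h
  · exact absurd hab (zeroCount_lt_zeroCount f h hb).ne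
  · exact h
  · exact absurd hab (zeroCount_lt_zeroCount f h ha).ne'

lemma existsUnique_zeroCount_eq {n m : ℕ} (hm : m ∈ Icc 1 (zeroCount f n)) :
    ∃! j, j ∈ Icc 1 n ∧ f j = 0 ∧ zeroCount f j = m := by
  rw [mem_Icc] at hm
  have hex : ∃ j, m ≤ zeroCount f j := ⟨n, hm.2⟩
  obtain ⟨j, hj⟩ : ∃ j, Nat.find hex = j + 1 :=
    Nat.exists_eq_add_one.2 (Nat.pos_of_ne_zero fun h => by
      have := Nat.find_spec hex; rw [h, zeroCount_zero] at this; omega)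
  have hle : m ≤ zeroCount f (j + 1) := hj ▸ Nat.find_spec hex
  have hlt : zeroCount f j < m := not_le.1 (Nat.find_min hex (by omega))
  rw [zeroCount_succ] at hle
  have hj0 : f (j + 1) = 0 := by by_contra h; rw [if_neg h] at hle; omega
  rw [if_pos hj0] at hle
  refine ⟨j + 1, ⟨mem_Icc.2 ⟨by omega, hj ▸ Nat.find_min' hex hm.2⟩, hj0, ?_⟩, ?_⟩
  · rw [zeroCount_succ, if_pos hj0]; omega
  · rintro i ⟨-, hi0, hi⟩
    exact eq_of_zeroCount_eq f hi0 hj0 (by rw [hi, zeroCount_succ, if_pos hj0]; omega)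

lemma zeroCount_add_sum {n : ℕ} (hf : ∀ t ∈ Icc 1 n, f t ≤ 1) {j : ℕ} (hj : j ≤ n) :
    zeroCount f j + ∑ t ∈ Icc 1 j, f t = j := by
  rw [zeroCount, card_filter_eq_zero_add_sum fun t ht => hf t (Icc_subset_Icc le_rfl hj ht),
    Nat.card_Icc, Nat.add_sub_cancel]

lemma zeroCount_eq_of_sum_eq {n K : ℕ} (hK : K ≤ n) (hf : ∀ t ∈ Icc 1 n, f t ≤ 1)
    (hs : ∑ t ∈ Icc 1 n, f t = n - K) : zeroCount f n = K := by
  have := zeroCount_add_sum f hf le_rfl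
  omega

end ZeroCount

section Majorization

variable {n : ℕ} {γ δ : ℕ → ℕ}

/-- `γ ⪰ δ^R`, with the prefix sums of `δ^R` written as suffix sums of `δ`. -/
def DominatesReverse (n : ℕ) (γ δ : ℕ → ℕ) : Prop :=
  ∀ k ≤ n, ∑ j ∈ Icc (n - k + 1) n, δ j ≤ ∑ i ∈ Icc 1 k, γ i

lemma dominatesReverse_iff : DominatesReverse n γ δ ↔
    ∀ k ∈ Icc 1 n, ∑ i ∈ Icc 1 k, δ (n - i + 1) ≤ ∑ i ∈ Icc 1 k, γ i := by
  refine ⟨fun h k hk => (sum_Icc_reverse δ (mem_Icc.1 hk).2).trans_le (h k (mem_Icc.1 hk).2),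
    fun h k hk => ?_⟩
  rcases Nat.eq_zero_or_pos k with rfl | hk0
  · simp
  · exact (sum_Icc_reverse δ hk).symm.trans_le (h k (mem_Icc.2 ⟨hk0, hk⟩))

lemma DominatesReverse.symm (hs : ∑ i ∈ Icc 1 n, γ i = ∑ i ∈ Icc 1 n, δ i)
    (h : DominatesReverse n γ δ) : DominatesReverse n δ γ := by
  intro k hk
  have hcompl := h (n - k) (Nat.sub_le n k)
  rw [Nat.sub_sub_self hk] at hcompl
  have := sum_Icc_one_add_sum_Icc_succ γ (Nat.sub_le n k)
  have := sum_Icc_one_add_sum_Icc_succ δ hk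
  omega

lemma DominatesReverse.of_card_rows_cols (A : ℕ → ℕ → Prop) [DecidableRel A]
    (hrow : ∀ i ∈ Icc 1 n, #{j ∈ Icc 1 n | A i j} + 1 = i + γ i)
    (hcol : ∀ j ∈ Icc 1 n, #{i ∈ Icc 1 n | A i j} + 1 = j + δ j) :
    DominatesReverse n γ δ := by
  intro k hk
  have hids := sum_Icc_sub_add_one_id hk
  set tail := Icc (n - k + 1) n
  have htail : #tail = k := by simp only [tail, Nat.card_Icc]; omega
  have hcount := sum_card_filter_le_sum_min (Icc 1 n) (t := tail) (u := Icc 1 n)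
    (Icc_subset_Icc (by omega) le_rfl) A
  rw [htail, ← sum_Icc_one_add_sum_Icc_succ _ hk] at hcount
  have hcols : ∑ j ∈ tail, (#{i ∈ Icc 1 n | A i j} + 1) = ∑ j ∈ tail, j + ∑ j ∈ tail, δ j := by
    rw [← sum_add_distrib]
    exact sum_congr rfl fun j hj => hcol j (Icc_subset_Icc (by omega) le_rfl hj)
  have htop : ∑ i ∈ Icc 1 k, (min #{j ∈ Icc 1 n | A i j} k + 1) ≤
      ∑ i ∈ Icc 1 k, i + ∑ i ∈ Icc 1 k, γ i := by
    rw [← sum_add_distrib]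
    refine sum_le_sum fun i hi => ?_
    rw [← hrow i (Icc_subset_Icc le_rfl hk hi)]
    omega
  have hbottom : ∑ i ∈ Icc (k + 1) n, min #{j ∈ Icc 1 n | A i j} k ≤ (n - k) * k := by
    simpa using sum_le_card_nsmul (Icc (k + 1) n) _ k fun i _ => min_le_right _ k
  simp only [sum_add_distrib, sum_const, Nat.card_Icc, smul_eq_mul, mul_one, htail] at hcols htop
  omega

end Majorization

section Staircase

variable {n K : ℕ} {γ δ : ℕ → ℕ}

lemma zeroCount_add_zeroCount_le (hγ : ∀ i ∈ Icc 1 n, γ i ≤ 1) (hδ : ∀ i ∈ Icc 1 n, δ i ≤ 1)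
    (hδs : ∑ i ∈ Icc 1 n, δ i = n - K) (h : DominatesReverse n γ δ) {i j : ℕ}
    (hij : i + j ≤ n) : zeroCount γ i + zeroCount δ j ≤ K := by
  have := zeroCount_add_sum γ hγ (show i ≤ n by omega)
  have := zeroCount_add_sum δ hδ (Nat.sub_le n i)
  have := sum_Icc_one_add_sum_Icc_succ δ (Nat.sub_le n i)
  have := zeroCount_mono δ (show j ≤ n - i by omega)
  have := h i (by omega)
  omega

def staircaseBlock (n K : ℕ) (γ δ : ℕ → ℕ) (i j : ℕ) : Prop :=
  n + 1 ≤ i + j ∧ ¬(γ i = 0 ∧ δ j = 0 ∧ zeroCount γ i + zeroCount δ j = K + 1)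

instance : DecidableRel (staircaseBlock n K γ δ) := fun _ _ =>
  inferInstanceAs (Decidable (_ ∧ _))

lemma staircaseBlock_comm {i j : ℕ} :
    staircaseBlock n K γ δ i j ↔ staircaseBlock n K δ γ j i := by
  simp only [staircaseBlock, add_comm j i, add_comm (zeroCount δ j)]
  tauto

lemma card_staircaseBlock_row (hK : K ≤ n) (hγ : ∀ i ∈ Icc 1 n, γ i ≤ 1)
    (hδ : ∀ i ∈ Icc 1 n, δ i ≤ 1) (hγs : ∑ i ∈ Icc 1 n, γ i = n - K)
    (hδs : ∑ i ∈ Icc 1 n, δ i = n - K) (h : DominatesReverse n γ δ) {i : ℕ}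
    (hi : i ∈ Icc 1 n) : #{j ∈ Icc 1 n | staircaseBlock n K γ δ i j} + 1 = i + γ i := by
  rw [mem_Icc] at hi
  set stair := {j ∈ Icc 1 n | n + 1 ≤ i + j}
  have hstair : #stair = i := by
    rw [show stair = Icc (n + 1 - i) n by ext; simp only [stair, mem_filter, mem_Icc]; omega, Nat.card_Icc]
    omega
  by_cases hγi : γ i = 0
  · have hzγ_pos : 0 < zeroCount γ i := zeroCount_lt_zeroCount γ hi.1 hγi
    have hzγ_le : zeroCount γ i ≤ K := zeroCount_eq_of_sum_eq γ hK hγ hγs ▸ zeroCount_mono γ hi.2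
    obtain ⟨j₀, ⟨hj₀, hδj₀, hzj₀⟩, huniq⟩ := existsUnique_zeroCount_eq δ
      (n := n) (m := K + 1 - zeroCount γ i)
      (by rw [zeroCount_eq_of_sum_eq δ hK hδ hδs, mem_Icc]; omega)
    have hj₀stair : n + 1 ≤ i + j₀ := by
      by_contra hlt
      have := zeroCount_add_zeroCount_le hγ hδ hδs h (i := i) (j := j₀) (by omega)
      omega
    have hrow : {j ∈ Icc 1 n | staircaseBlock n K γ δ i j} = stair.erase j₀ := by
      ext j
      simp only [staircaseBlock, hγi, mem_filter, mem_erase, stair, true_and]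
      constructor
      · rintro ⟨hj, hjs, hne⟩
        refine ⟨?_, hj, hjs⟩
        rintro rfl
        exact hne ⟨hδj₀, by omega⟩
      · rintro ⟨hne, hj, hjs⟩
        refine ⟨hj, hjs, fun hzero => hne (huniq j ⟨hj, hzero.1, ?_⟩)⟩
        omega
    rw [hrow, card_erase_of_mem (mem_filter.2 ⟨hj₀, hj₀stair⟩), hstair, hγi]
    omega
  · have hrow : {j ∈ Icc 1 n | staircaseBlock n K γ δ i j} = stair :=
      filter_congr fun j _ => by simp [staircaseBlock, hγi]
    have := hγ i (mem_Icc.2 hi)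
    rw [hrow, hstair]
    omega

lemma card_staircaseBlock_col (hK : K ≤ n) (hγ : ∀ i ∈ Icc 1 n, γ i ≤ 1)
    (hδ : ∀ i ∈ Icc 1 n, δ i ≤ 1) (hγs : ∑ i ∈ Icc 1 n, γ i = n - K)
    (hδs : ∑ i ∈ Icc 1 n, δ i = n - K) (h : DominatesReverse n γ δ) {j : ℕ}
    (hj : j ∈ Icc 1 n) : #{i ∈ Icc 1 n | staircaseBlock n K γ δ i j} + 1 = j + δ j := by
  simp only [staircaseBlock_comm (γ := γ)]
  exact card_staircaseBlock_row hK hδ hγ hδs hγs (h.symm (hγs.trans hδs.symm)) hj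

end Staircase

section Margins

variable {n K : ℕ} {γ δ : ℕ → ℕ}

def azureSum (n K i : ℕ) : ℕ := if i ≤ n then i else if i = n + 1 then 0 else K

def beigeSum (n K : ℕ) (γ : ℕ → ℕ) (i : ℕ) : ℕ :=
  if i ≤ n then γ i else if i = n + 1 then 2 else n - K + 2

/-- Colour `1` is azure and `2` is beige; the cyan margins (all zero) and the range of `T` are
not part of this predicate. -/
def HasASMMargins (n K : ℕ) (γ δ : ℕ → ℕ) (T : ℕ → ℕ → ℕ) : Prop :=
  (∀ i ∈ Icc 1 (n + 2), #{j ∈ Icc 1 (n + 2) | T i j = 1} = azureSum n K i ∧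
    #{j ∈ Icc 1 (n + 2) | T i j = 2} = beigeSum n K γ i) ∧
  (∀ j ∈ Icc 1 (n + 2), #{i ∈ Icc 1 (n + 2) | T i j = 1} = azureSum n K j ∧
    #{i ∈ Icc 1 (n + 2) | T i j = 2} = beigeSum n K δ j)

namespace HasASMMargins

variable {T : ℕ → ℕ → ℕ}

lemma transpose (hT : HasASMMargins n K γ δ T) : HasASMMargins n K δ γ (fun i j => T j i) :=
  ⟨hT.2, hT.1⟩

lemma ne_one_col_succ (hT : HasASMMargins n K γ δ T) :
    ∀ i ∈ Icc 1 (n + 2), T i (n + 1) ≠ 1 := by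
  have := (hT.2 (n + 1) (by simp)).1
  simp only [azureSum, if_neg (show ¬ n + 1 ≤ n by omega), if_true] at this
  exact card_filter_eq_zero_iff.1 this

lemma last_row_full (hT : HasASMMargins n K γ δ T) :
    ∀ j ∈ Icc 1 (n + 2), T (n + 2) j = 1 ∨ T (n + 2) j = 2 := by
  obtain ⟨hazure, hbeige⟩ := hT.1 (n + 2) (by simp)
  simp only [azureSum, beigeSum, if_neg (show ¬ n + 2 ≤ n by omega),
    if_neg (show n + 2 ≠ n + 1 by omega)] at hazure hbeige
  refine card_filter_eq_iff.1 (le_antisymm (card_filter_le _ _) ?_)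
  rw [filter_or, card_union_of_disjoint (disjoint_filter.2 fun _ _ h => by omega), hazure, hbeige,
    Nat.card_Icc]
  omega

lemma last_row_beige_iff (hT : HasASMMargins n K γ δ T) (hδ : ∀ i ∈ Icc 1 n, δ i ≤ 1)
    (hδs : ∑ i ∈ Icc 1 n, δ i = n - K) :
    ∀ j ∈ Icc 1 n, T (n + 2) j = 2 ↔ δ j = 1 := by
  have hsub : {j ∈ Icc 1 n | T (n + 2) j = 2} ⊆ {j ∈ Icc 1 n | δ j = 1} := by
    intro j hj
    obtain ⟨hj, h⟩ := mem_filter.1 hj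
    refine mem_filter.2 ⟨hj, ?_⟩
    have hcol := (hT.2 j (Icc_subset_Icc le_rfl (by omega) hj)).2
    simp only [beigeSum, if_pos (mem_Icc.1 hj).2] at hcol
    have : 0 < #{i ∈ Icc 1 (n + 2) | T i j = 2} := card_pos.2 ⟨n + 2, by simp [h]⟩
    have := hδ j hj
    omega
  have hcorner : T (n + 2) (n + 1) = 2 :=
    (hT.last_row_full (n + 1) (by simp)).resolve_left (hT.ne_one_col_succ (n + 2) (by simp))
  have hbeige := (hT.1 (n + 2) (by simp)).2
  simp only [beigeSum, if_neg (show ¬ n + 2 ≤ n by omega),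
    if_neg (show n + 2 ≠ n + 1 by omega), card_filter_Icc_add_two, if_pos hcorner] at hbeige
  have hones : #{j ∈ Icc 1 n | δ j = 1} = n - K := (card_filter_eq_one_eq_sum hδ).trans hδs
  have heq := eq_of_subset_of_card_le hsub (by split_ifs at hbeige <;> omega)
  exact filter_inj'.1 heq

lemma card_block_row (hT : HasASMMargins n K γ δ T) (hγ : ∀ i ∈ Icc 1 n, γ i ≤ 1)
    (hγs : ∑ i ∈ Icc 1 n, γ i = n - K) :
    ∀ i ∈ Icc 1 n, #{j ∈ Icc 1 n | T i j = 1} + 1 = i + γ i := by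
  intro i hi
  have hi' : i ∈ Icc 1 (n + 2) := Icc_subset_Icc le_rfl (by omega) hi
  have hfull := hT.transpose.last_row_full i hi'
  have hbeige := hT.transpose.last_row_beige_iff hγ hγs i hi
  have hazure := (hT.1 i hi').1
  simp only [azureSum, if_pos (mem_Icc.1 hi).2, card_filter_Icc_add_two,
    if_neg (hT.ne_one_col_succ i hi')] at hazure
  have := hγ i hi
  split_ifs at hazure <;> omega

end HasASMMargins

end Margins

section Construction

variable {n K : ℕ} {γ δ : ℕ → ℕ} (A : ℕ → ℕ → Prop) [DecidableRel A]

def asmMatrix (n : ℕ) (γ δ : ℕ → ℕ) (A : ℕ → ℕ → Prop) [DecidableRel A] (i j : ℕ) : ℕ :=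
  if i ≤ n then
    if j ≤ n then (if A i j then 1 else 0)
    else if j = n + 1 then 0
    else if γ i = 0 then 1 else 2
  else if i = n + 1 then (if j ≤ n then 0 else 2)
  else if j ≤ n then (if δ j = 0 then 1 else 2)
  else 2

lemma asmMatrix_of_le {i j : ℕ} (hi : i ≤ n) (hj : j ≤ n) :
    asmMatrix n γ δ A i j = if A i j then 1 else 0 := by
  simp [asmMatrix, hi, hj]

lemma asmMatrix_le_two (i j : ℕ) : asmMatrix n γ δ A i j ≤ 2 := by
  unfold asmMatrix; split_ifs <;> omega

lemma asmMatrix_transpose (i j : ℕ) :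
    asmMatrix n γ δ A i j = asmMatrix n δ γ (fun a b => A b a) j i := by
  unfold asmMatrix; split_ifs <;> omega

lemma asmMatrix_row (hK : K ≤ n) (hγ : ∀ i ∈ Icc 1 n, γ i ≤ 1) (hδ : ∀ i ∈ Icc 1 n, δ i ≤ 1)
    (hδs : ∑ i ∈ Icc 1 n, δ i = n - K)
    (hrow : ∀ i ∈ Icc 1 n, #{j ∈ Icc 1 n | A i j} + 1 = i + γ i) :
    ∀ i ∈ Icc 1 (n + 2), #{j ∈ Icc 1 (n + 2) | asmMatrix n γ δ A i j = 1} = azureSum n K i ∧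
      #{j ∈ Icc 1 (n + 2) | asmMatrix n γ δ A i j = 2} = beigeSum n K γ i := by
  intro i hi
  simp only [card_filter_Icc_add_two, azureSum, beigeSum]
  rcases le_or_gt i n with hin | hin
  · have hi' : i ∈ Icc 1 n := mem_Icc.2 ⟨(mem_Icc.1 hi).1, hin⟩
    have hazure : {j ∈ Icc 1 n | asmMatrix n γ δ A i j = 1} = {j ∈ Icc 1 n | A i j} :=
      filter_congr fun j hj => by simp [asmMatrix_of_le A hin (mem_Icc.1 hj).2]
    have hbeige : {j ∈ Icc 1 n | asmMatrix n γ δ A i j = 2} = ∅ :=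
      filter_eq_empty_iff.2 fun j hj => by
        rw [asmMatrix_of_le A hin (mem_Icc.1 hj).2]
        split_ifs <;> simp
    have := hrow i hi'
    rw [hazure, hbeige, card_empty, if_pos hin, if_pos hin,
      show asmMatrix n γ δ A i (n + 1) = 0 by simp [asmMatrix, hin]]
    rcases (show γ i = 0 ∨ γ i = 1 by have := hγ i hi'; omega) with h | h
    · rw [show asmMatrix n γ δ A i (n + 2) = 1 by simp [asmMatrix, hin, h]]
      simp only [Nat.reduceEqDiff, ↓reduceIte]
      omega
    · rw [show asmMatrix n γ δ A i (n + 2) = 2 by simp [asmMatrix, hin, h]]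
      simp only [Nat.reduceEqDiff, ↓reduceIte]
      omega
  rcases (show i = n + 1 ∨ i = n + 2 by rw [mem_Icc] at hi; omega) with rfl | rfl
  · have hblank : ∀ c ≠ 0, {j ∈ Icc 1 n | asmMatrix n γ δ A (n + 1) j = c} = ∅ :=
      fun c hc => filter_eq_empty_iff.2 fun j hj => by simp [asmMatrix, (mem_Icc.1 hj).2, hc.symm]
    rw [hblank 1 one_ne_zero, hblank 2 two_ne_zero]
    simp [asmMatrix]
  · have hazure : {j ∈ Icc 1 n | asmMatrix n γ δ A (n + 2) j = 1} = {j ∈ Icc 1 n | δ j = 0} :=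
      filter_congr fun j hj => by simp [asmMatrix, (mem_Icc.1 hj).2]
    have hbeige : {j ∈ Icc 1 n | asmMatrix n γ δ A (n + 2) j = 2} = {j ∈ Icc 1 n | δ j = 1} :=
      filter_congr fun j hj => by
        have := hδ j hj
        unfold asmMatrix
        rw [if_neg (by omega), if_neg (by omega), if_pos (mem_Icc.1 hj).2]
        split_ifs <;> omega
    have hzeros : #{j ∈ Icc 1 n | δ j = 0} = K := zeroCount_eq_of_sum_eq δ hK hδ hδs
    rw [hazure, hbeige, hzeros, card_filter_eq_one_eq_sum hδ, hδs]
    simp [asmMatrix]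

lemma hasASMMargins_asmMatrix (hK : K ≤ n) (hγ : ∀ i ∈ Icc 1 n, γ i ≤ 1)
    (hδ : ∀ i ∈ Icc 1 n, δ i ≤ 1) (hγs : ∑ i ∈ Icc 1 n, γ i = n - K)
    (hδs : ∑ i ∈ Icc 1 n, δ i = n - K)
    (hrow : ∀ i ∈ Icc 1 n, #{j ∈ Icc 1 n | A i j} + 1 = i + γ i)
    (hcol : ∀ j ∈ Icc 1 n, #{i ∈ Icc 1 n | A i j} + 1 = j + δ j) :
    HasASMMargins n K γ δ (asmMatrix n γ δ A) := by
  refine ⟨asmMatrix_row A hK hγ hδ hδs hrow, fun j hj => ?_⟩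
  simp only [asmMatrix_transpose A _ j]
  exact asmMatrix_row (fun a b => A b a) hK hδ hγ hγs hcol j hj

end Construction

/-- Let γ, δ be 0-1 vectors of length n, both with total sum
n−K (0 ≤ K ≤ n). The (n+2)×(n+2) azure skew mirror instance ASM(γ,δ) of
3-CCP is consistent iff γ ⪰ δ^R. Colors: 1 = azure, 2 = beige, 3 = cyan,
0 = blank. Azure sums: i for i ≤ n, 0 for i = n+1, K for i = n+2; beige sums:
γ_i (resp. δ_i) for i ≤ n, 2 for i = n+1, n−K+2 for i = n+2; cyan sums 0. -/
theorem stmt_17 (n K : ℕ) (hK : K ≤ n) (γ δ : ℕ → ℕ)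
    (hγ : ∀ i ∈ Finset.Icc 1 n, γ i ≤ 1)
    (hδ : ∀ i ∈ Finset.Icc 1 n, δ i ≤ 1)
    (hγs : ∑ i ∈ Finset.Icc 1 n, γ i = n - K)
    (hδs : ∑ i ∈ Finset.Icc 1 n, δ i = n - K)
    (xA yA xB yB : ℕ → ℕ)
    (hxA : ∀ i ∈ Finset.Icc 1 (n+2), xA i =
      if i ≤ n then i else if i = n + 1 then 0 else K)
    (hyA : ∀ i ∈ Finset.Icc 1 (n+2), yA i =
      if i ≤ n then i else if i = n + 1 then 0 else K)
    (hxB : ∀ i ∈ Finset.Icc 1 (n+2), xB i =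
      if i ≤ n then γ i else if i = n + 1 then 2 else n - K + 2)
    (hyB : ∀ i ∈ Finset.Icc 1 (n+2), yB i =
      if i ≤ n then δ i else if i = n + 1 then 2 else n - K + 2) :
    (∃ T : ℕ → ℕ → ℕ,
      (∀ i ∈ Finset.Icc 1 (n+2), ∀ j ∈ Finset.Icc 1 (n+2), T i j ≤ 3) ∧
      (∀ i ∈ Finset.Icc 1 (n+2),
        ((Finset.Icc 1 (n+2)).filter (fun j => T i j = 1)).card = xA i) ∧
      (∀ j ∈ Finset.Icc 1 (n+2),
        ((Finset.Icc 1 (n+2)).filter (fun i => T i j = 1)).card = yA j) ∧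
      (∀ i ∈ Finset.Icc 1 (n+2),
        ((Finset.Icc 1 (n+2)).filter (fun j => T i j = 2)).card = xB i) ∧
      (∀ j ∈ Finset.Icc 1 (n+2),
        ((Finset.Icc 1 (n+2)).filter (fun i => T i j = 2)).card = yB j) ∧
      (∀ i ∈ Finset.Icc 1 (n+2),
        ((Finset.Icc 1 (n+2)).filter (fun j => T i j = 3)).card = 0) ∧
      (∀ j ∈ Finset.Icc 1 (n+2),
        ((Finset.Icc 1 (n+2)).filter (fun i => T i j = 3)).card = 0)) ↔
    (∀ k ∈ Finset.Icc 1 n,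
      ∑ i ∈ Finset.Icc 1 k, δ (n - i + 1) ≤ ∑ i ∈ Finset.Icc 1 k, γ i) := by
  rw [← dominatesReverse_iff]
  constructor
  · rintro ⟨T, -, hxa, hya, hxb, hyb, -, -⟩
    have hT : HasASMMargins n K γ δ T :=
      ⟨fun i hi => ⟨(hxa i hi).trans (hxA i hi), (hxb i hi).trans (hxB i hi)⟩,
        fun j hj => ⟨(hya j hj).trans (hyA j hj), (hyb j hj).trans (hyB j hj)⟩⟩
    exact .of_card_rows_cols (fun i j => T i j = 1) (hT.card_block_row hγ hγs)
      (hT.transpose.card_block_row hδ hδs)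
  · intro h
    obtain ⟨hrows, hcols⟩ := hasASMMargins_asmMatrix (staircaseBlock n K γ δ) hK hγ hδ hγs hδs
      (fun i => card_staircaseBlock_row hK hγ hδ hγs hδs h)
      (fun j => card_staircaseBlock_col hK hγ hδ hγs hδs h)
    have hno_cyan (i j : ℕ) : asmMatrix n γ δ (staircaseBlock n K γ δ) i j ≠ 3 :=
      (asmMatrix_le_two _ i j).trans_lt (by norm_num) |>.ne
    refine ⟨asmMatrix n γ δ (staircaseBlock n K γ δ),
      fun i _ j _ => (asmMatrix_le_two _ i j).trans (by norm_num),
      fun i hi => (hxA i hi).symm ▸ (hrows i hi).1, fun j hj => (hyA j hj).symm ▸ (hcols j hj).1,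
      fun i hi => (hxB i hi).symm ▸ (hrows i hi).2, fun j hj => (hyB j hj).symm ▸ (hcols j hj).2,
      fun i _ => card_filter_eq_zero_iff.2 fun j _ => hno_cyan i j,
      fun j _ => card_filter_eq_zero_iff.2 fun i _ => hno_cyan i j⟩
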